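/- arXiv:0909.4366 — 4 statements merged into one kernel-verified Lean document; each statement's English description precedes it below -/
import Mathlib

section
/- Let Y(t) be the fundamental matrix solution of ẏ = A(t)y with Y(0) = I, where A is continuous and T-periodic. Suppose S is an invertible n×n matrix such that S⁻¹Y(T)S is block upper-triangular with (1,1)-entry 1, zeros in the rest of the first row and first column, and lower-right (n-1)×(n-1) block A₀ with det(A₀ - I) ≠ 0. If z₁(t) is a nontrivial T-periodic solution of the adjoint system ż = -A(t)ᵀz, then ⟨z₁(0), S e₁⟩ ≠ 0, where S e₁ is the first column of S. -/
/-!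
Pairing a solution of `ẏ = A y` with a solution of the adjoint system gives a conserved
quantity, so `z₁(0)ᵀ Y(T) = z₁(T)ᵀ = z₁(0)ᵀ`: `z₁(0)` is a left fixed vector of the monodromy
matrix. Hence `w = z₁(0)ᵀ S` is a left fixed vector of `S⁻¹ Y(T) S`. If its first coordinate
`⟨z₁(0), S e₁⟩` vanished, its remaining coordinates would form a left fixed vector of `A₀`,
which is zero because `A₀ - I` is invertible. Then `z₁(0) = 0`, and uniqueness of solutions of
the linear adjoint system forces `z₁ = 0`.
-/

open Matrix Set

theorem HasDerivAt.dotProduct {n : Type*} [Fintype n] {f g : ℝ → n → ℝ} {f' g' : n → ℝ} {t : ℝ}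
    (hf : HasDerivAt f f' t) (hg : HasDerivAt g g' t) :
    HasDerivAt (fun s => f s ⬝ᵥ g s) (f' ⬝ᵥ g t + f t ⬝ᵥ g') t := by
  have hsum := HasDerivAt.fun_sum (u := Finset.univ) fun i _ =>
    (hasDerivAt_pi.mp hf i).mul (hasDerivAt_pi.mp hg i)
  simp only [Pi.mul_apply, Finset.sum_add_distrib] at hsum
  exact hsum

theorem eq_zero_of_hasDerivAt_clm_apply {E : Type*} [NormedAddCommGroup E] [NormedSpace ℝ E]
    {L : ℝ → E →L[ℝ] E} (hL : Continuous L) {z : ℝ → E}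
    (hz : ∀ t, HasDerivAt z (L t (z t)) t) {t₀ : ℝ} (h₀ : z t₀ = 0) : z = 0 := by
  ext t
  obtain ⟨a, b, ht, ht₀⟩ : ∃ a b, t ∈ Ioo a b ∧ t₀ ∈ Ioo a b :=
    ⟨min t t₀ - 1, max t t₀ + 1, by grind, by grind⟩
  obtain ⟨C, hC⟩ := (isCompact_Icc (a := a) (b := b)).exists_bound_of_continuousOn hL.continuousOn
  have hbound : ∀ s ∈ Icc a b, ‖L s‖₊ ≤ C.toNNReal := fun s hs => by
    rw [← norm_toNNReal]
    exact Real.toNNReal_le_toNNReal (hC s hs)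
  have hLip : ∀ s ∈ Ioo a b, LipschitzOnWith C.toNNReal (L s) univ := fun s hs =>
    ((L s).lipschitz.weaken (hbound s (Ioo_subset_Icc_self hs))).lipschitzOnWith
  refine ODE_solution_unique_of_mem_Ioo hLip ht₀ (fun s _ => ⟨hz s, trivial⟩)
    (g := 0) (fun s _ => ⟨by simp, trivial⟩) h₀ ht

theorem Matrix.continuous_of_continuous_mulVec {X m n R : Type*} [TopologicalSpace X]
    [Fintype n] [DecidableEq n] [Semiring R] [TopologicalSpace R]
    {A : X → Matrix m n R} (hA : Continuous fun p : X × (n → R) => A p.1 *ᵥ p.2) :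
    Continuous A :=
  continuous_matrix fun i j => by
    have := (continuous_apply i).comp
      (hA.comp (continuous_id.prodMk (continuous_const (y := (Pi.single j 1 : n → R)))))
    simpa [Function.comp_def, mulVec_single] using this

theorem eq_zero_of_hasDerivAt_mulVec {n : Type*} [Fintype n] [DecidableEq n]
    {B : ℝ → Matrix n n ℝ} (hB : Continuous B) {z : ℝ → n → ℝ}
    (hz : ∀ t, HasDerivAt z (B t *ᵥ z t) t) {t₀ : ℝ} (h₀ : z t₀ = 0) : z = 0 := by
  refine eq_zero_of_hasDerivAt_clm_apply (L := fun t => (toLin' (B t)).toContinuousLinearMap)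
    ?_ (by simpa using hz) h₀
  exact continuous_clm_apply.2 fun y => by simpa using hB.matrix_mulVec continuous_const

theorem dotProduct_eq_of_hasDerivAt_adjoint {n : Type*} [Fintype n] {A : ℝ → Matrix n n ℝ}
    {y z : ℝ → n → ℝ} (hy : ∀ t, HasDerivAt y (A t *ᵥ y t) t)
    (hz : ∀ t, HasDerivAt z (-((A t)ᵀ *ᵥ z t)) t) (s t : ℝ) :
    z s ⬝ᵥ y s = z t ⬝ᵥ y t := by
  have hderiv : ∀ r, HasDerivAt (fun r => z r ⬝ᵥ y r) 0 r := fun r => by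
    convert (hz r).dotProduct (hy r) using 1
    rw [neg_dotProduct, mulVec_transpose, dotProduct_mulVec, neg_add_cancel]
  exact is_const_of_deriv_eq_zero (fun r => (hderiv r).differentiableAt)
    (fun r => (hderiv r).deriv) s t

theorem vecMul_eq_of_hasDerivAt_adjoint {n : Type*} [Fintype n] [DecidableEq n]
    {A Y : ℝ → Matrix n n ℝ}
    (hY : ∀ v t, HasDerivAt (fun s => Y s *ᵥ v) (A t *ᵥ (Y t *ᵥ v)) t) {z : ℝ → n → ℝ}
    (hz : ∀ t, HasDerivAt z (-((A t)ᵀ *ᵥ z t)) t) (s t : ℝ) :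
    z s ᵥ* Y s = z t ᵥ* Y t := by
  ext j
  simpa [vecMul_apply] using dotProduct_eq_of_hasDerivAt_adjoint (hY (Pi.single j 1)) hz s t

theorem Matrix.eq_zero_of_vecMul_eq_self_of_head_eq_zero {K : Type*} [Field K] {m : ℕ}
    {M : Matrix (Fin (m + 1)) (Fin (m + 1)) K} {A₀ : Matrix (Fin m) (Fin m) K}
    (hM : ∀ i j, M i.succ j.succ = A₀ i j) (hA₀ : (A₀ - 1).det ≠ 0)
    {w : Fin (m + 1) → K} (hw : w ᵥ* M = w) (h₀ : w 0 = 0) : w = 0 := by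
  have htail : Fin.tail w ᵥ* (A₀ - 1) = 0 := by
    rw [vecMul_sub, vecMul_one, sub_eq_zero]
    ext j
    simpa [vecMul, dotProduct, Fin.sum_univ_succ, h₀, hM, Fin.tail] using congrFun hw j.succ
  have htail0 : Fin.tail w = 0 := by
    by_contra hne
    exact hA₀ (exists_vecMul_eq_zero_iff.1 ⟨_, hne, htail⟩)
  ext i
  exact Fin.cases h₀ (congrFun htail0) i

theorem adjoint_periodic_not_orthogonal_first_column_general
    {m : ℕ} (T : ℝ)
    (A : ℝ → Matrix (Fin (m + 1)) (Fin (m + 1)) ℝ)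
    (hAcont : Continuous fun p : ℝ × (Fin (m + 1) → ℝ) => (A p.1).mulVec p.2)
    (Y : ℝ → Matrix (Fin (m + 1)) (Fin (m + 1)) ℝ)
    (hY : ∀ (v : Fin (m + 1) → ℝ) (t : ℝ),
      HasDerivAt (fun s => (Y s).mulVec v) ((A t).mulVec ((Y t).mulVec v)) t)
    (hY0 : Y 0 = 1)
    (S : Matrix (Fin (m + 1)) (Fin (m + 1)) ℝ) (hS : IsUnit S.det)
    (A₀ : Matrix (Fin m) (Fin m) ℝ)
    (hblockA : ∀ i j : Fin m, (S⁻¹ * Y T * S) i.succ j.succ = A₀ i j)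
    (hA₀ : (A₀ - 1).det ≠ 0)
    (z₁ : ℝ → Fin (m + 1) → ℝ)
    (hz₁ : ∀ t, HasDerivAt z₁ (-(A t)ᵀ.mulVec (z₁ t)) t)
    (hz₁per : ∀ t, z₁ (t + T) = z₁ t)
    (hz₁ne : z₁ ≠ 0) :
    z₁ 0 ⬝ᵥ (fun i => S i 0) ≠ 0 := by
  intro horth
  have hperiod : z₁ T = z₁ 0 := by simpa using hz₁per 0
  have hfix : z₁ 0 ᵥ* Y T = z₁ 0 := by
    simpa [hY0, hperiod] using vecMul_eq_of_hasDerivAt_adjoint hY hz₁ T 0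
  have hconj : (z₁ 0 ᵥ* S) ᵥ* (S⁻¹ * Y T * S) = z₁ 0 ᵥ* S := by
    rw [vecMul_vecMul, ← Matrix.mul_assoc, ← Matrix.mul_assoc, mul_nonsing_inv S hS,
      Matrix.one_mul, ← vecMul_vecMul, hfix]
  have hw : z₁ 0 ᵥ* S = 0 :=
    eq_zero_of_vecMul_eq_self_of_head_eq_zero hblockA hA₀ hconj horth
  have hz₁0 : z₁ 0 = 0 :=
    vecMul_injective_of_isUnit ((isUnit_iff_isUnit_det S).2 hS) (hw.trans (zero_vecMul S).symm)
  have hAdj : Continuous fun t => -(A t)ᵀ :=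
    (continuous_of_continuous_mulVec hAcont).matrix_transpose.neg
  exact hz₁ne (eq_zero_of_hasDerivAt_mulVec hAdj (by simpa [neg_mulVec] using hz₁) hz₁0)

/-- If the monodromy matrix `Y(T)` is conjugated by `S` into a block form with
`(1,1)` entry `1`, zeros elsewhere in the first row and column, and lower-right
block `A₀` with `det (A₀ - I) ≠ 0`, then every nontrivial `T`-periodic solution
`z₁` of the adjoint system satisfies `⟨z₁(0), S e₁⟩ ≠ 0`. -/
theorem adjoint_periodic_not_orthogonal_first_column
    {m : ℕ} (T : ℝ) (hT : 0 < T)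
    (A : ℝ → Matrix (Fin (m + 1)) (Fin (m + 1)) ℝ)
    (hAcont : Continuous fun p : ℝ × (Fin (m + 1) → ℝ) => (A p.1).mulVec p.2)
    (hAper : ∀ t, A (t + T) = A t)
    (Y : ℝ → Matrix (Fin (m + 1)) (Fin (m + 1)) ℝ)
    (hY : ∀ (v : Fin (m + 1) → ℝ) (t : ℝ),
      HasDerivAt (fun s => (Y s).mulVec v) ((A t).mulVec ((Y t).mulVec v)) t)
    (hY0 : Y 0 = 1)
    (S : Matrix (Fin (m + 1)) (Fin (m + 1)) ℝ) (hS : IsUnit S.det)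
    (A₀ : Matrix (Fin m) (Fin m) ℝ)
    (hblock11 : (S⁻¹ * Y T * S) 0 0 = 1)
    (hblockrow : ∀ j : Fin m, (S⁻¹ * Y T * S) 0 j.succ = 0)
    (hblockcol : ∀ i : Fin m, (S⁻¹ * Y T * S) i.succ 0 = 0)
    (hblockA : ∀ i j : Fin m, (S⁻¹ * Y T * S) i.succ j.succ = A₀ i j)
    (hA₀ : (A₀ - 1).det ≠ 0)
    (z₁ : ℝ → Fin (m + 1) → ℝ)
    (hz₁ : ∀ t, HasDerivAt z₁ (-(A t)ᵀ.mulVec (z₁ t)) t)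
    (hz₁per : ∀ t, z₁ (t + T) = z₁ t)
    (hz₁ne : z₁ ≠ 0) :
    z₁ 0 ⬝ᵥ (fun i => S i 0) ≠ 0 :=
  adjoint_periodic_not_orthogonal_first_column_general T A hAcont Y hY hY0 S hS A₀ hblockA hA₀ z₁
    hz₁ hz₁per hz₁ne
end

section
/- The functions y₁(t) = i e^{it} and y₂(t) = (-1+i)e^{(-2+i)t} are solutions of the real-linear equation ẏ = (-1+2i)y + (-1+i)e^{2it}ȳ on ℂ, and consequently for T = 2Nπ (N a positive integer) this equation has Floquet multipliers μ₁ = 1 and μ₂ = e^{-2T}. -/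
/-!
Both solutions come from the ansatz `y(t) = a e^{ct}`. For `ẏ = α y + β e^{κt} ȳ` it turns the
equation into two algebraic conditions: `κ + c̄ = c`, so that `e^{κt}` times the conjugate
exponential `e^{c̄t}` is again `e^{ct}`, and `a c = α a + β ā`. Such a solution satisfies
`y(t + T) = e^{cT} y(t)`, and for `T = 2Nπ` with `Im c ∈ ℤ` this multiplier is `e^{(Re c) T}`.
-/

open Complex ComplexConjugate

theorem hasDerivAt_const_mul_cexp_ofReal (a c : ℂ) (t : ℝ) :
    HasDerivAt (fun s : ℝ => a * exp (c * s)) (a * (c * exp (c * t))) t := by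
  have h := ((hasDerivAt_id (t : ℂ)).const_mul c).cexp.comp_ofReal.const_mul a
  simpa [mul_comm c] using h

theorem const_mul_cexp_solves_conj_linear_ode {α β κ a c : ℂ} (hc : κ + conj c = c)
    (ha : a * c = α * a + β * conj a) (t : ℝ) :
    HasDerivAt (fun s : ℝ => a * exp (c * s))
      (α * (a * exp (c * t)) + β * exp (κ * t) * conj (a * exp (c * t))) t := by
  have hrot : exp (κ * t) * exp (conj c * t) = exp (c * t) := by
    rw [← exp_add, ← add_mul, hc]
  convert hasDerivAt_const_mul_cexp_ofReal a c t using 1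
  rw [map_mul, ← exp_conj, map_mul, conj_ofReal]
  linear_combination (β * conj a) * hrot - exp (c * t) * ha

theorem const_mul_cexp_ofReal_add (a c : ℂ) (t T : ℝ) :
    a * exp (c * ((t + T : ℝ) : ℂ)) = exp (c * T) * (a * exp (c * t)) := by
  rw [ofReal_add, mul_add, exp_add]
  ring

theorem cexp_mul_two_pi_nat_of_im_eq_int {c : ℂ} {k : ℤ} (hk : c.im = k) (N : ℕ) :
    exp (c * ((2 * N * Real.pi : ℝ) : ℂ)) = Real.exp (c.re * (2 * N * Real.pi)) := by
  have hc : c = c.re + k * I := by apply Complex.ext <;> simp [hk]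
  have hsplit : c * ((2 * N * Real.pi : ℝ) : ℂ) =
      ((c.re * (2 * N * Real.pi) : ℝ) : ℂ) + (k * N : ℤ) * (2 * Real.pi * I) := by
    nth_rewrite 1 [hc]
    push_cast
    ring
  rw [hsplit, exp_add, exp_int_mul_two_pi_mul_I, mul_one, ofReal_exp]

/-- `y₁(t) = i e^{it}` and `y₂(t) = (-1+i)e^{(-2+i)t}` solve the real-linear equation
`ẏ = (-1+2i)y + (-1+i)e^{2it}ȳ`, and for `T = 2Nπ` they are Floquet solutions with
multipliers `μ₁ = 1` and `μ₂ = e^{-2T}`, respectively. -/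
theorem floquet_solutions_example :
    let y₁ : ℝ → ℂ := fun t => I * Complex.exp (I * t)
    let y₂ : ℝ → ℂ := fun t => (-1 + I) * Complex.exp ((-2 + I) * t)
    (∀ t : ℝ, HasDerivAt y₁
      ((-1 + 2 * I) * y₁ t + (-1 + I) * Complex.exp (2 * I * t) * (starRingEnd ℂ) (y₁ t)) t) ∧
    (∀ t : ℝ, HasDerivAt y₂
      ((-1 + 2 * I) * y₂ t + (-1 + I) * Complex.exp (2 * I * t) * (starRingEnd ℂ) (y₂ t)) t) ∧
    (∀ N : ℕ, 0 < N →
      (∀ t : ℝ, y₁ (t + 2 * N * Real.pi) = 1 * y₁ t) ∧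
      (∀ t : ℝ, y₂ (t + 2 * N * Real.pi) = (Real.exp (-2 * (2 * N * Real.pi)) : ℂ) * y₂ t)) := by
  intro y₁ y₂
  refine ⟨const_mul_cexp_solves_conj_linear_ode ?phase₁ ?coeff₁,
    const_mul_cexp_solves_conj_linear_ode ?phase₂ ?coeff₂,
    fun N _ => ⟨fun t => ?_, fun t => ?_⟩⟩
  case phase₁ | coeff₁ | phase₂ | coeff₂ => apply Complex.ext <;> norm_num
  · have hμ₁ := cexp_mul_two_pi_nat_of_im_eq_int (c := I) (k := 1) (by simp) N
    simp only [y₁, const_mul_cexp_ofReal_add, hμ₁]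
    simp
  · have hμ₂ := cexp_mul_two_pi_nat_of_im_eq_int (c := -2 + I) (k := 1) (by simp) N
    simp only [y₂, const_mul_cexp_ofReal_add, hμ₂]
    simp
end

section
/- For the system ẋ = (1-|x|²)x + i|x|²x + ε(a(t) + b(t)x + c(t)x̄) with x₀(t) = e^{it}, z₀(t) = (1+i)e^{it}, T = 2π, the bifurcation function M(θ) = ∫₀^{2π} ⟨a(t) + b(t)e^{i(t+θ)} + c(t)e^{-i(t+θ)}, z₀(t+θ)⟩ dt equals 2π Re[(â₁e^{-iθ} + b̂₀ + ĉ₂e^{-2iθ})(1-i)], where f̂ₘ = (1/2π)∫₀^{2π} f(t)e^{-imt} dt. -/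
/-!
Since `conj z₀(t + θ) = (1 - i) e^{-i(t+θ)}`, the integrand is `1 - i` times
`e^{-iθ} a(t) e^{-it} + b(t) + e^{-2iθ} c(t) e^{-2it}`. Taking the real part commutes with
integration, and the three integrals are `2π â₁`, `2π b̂₀` and `2π ĉ₂`.
-/

open Complex

-- `intervalIntegral.intervalIntegral_re` is phrased with `RCLike.re`, which `rw` does not match
-- against `Complex.re`.
theorem intervalIntegral_complex_re {f : ℝ → ℂ} {a b : ℝ} {μ : MeasureTheory.Measure ℝ}
    (hf : IntervalIntegrable f μ a b) :
    ∫ x in a..b, (f x).re ∂μ = (∫ x in a..b, f x ∂μ).re :=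
  intervalIntegral.intervalIntegral_re hf

theorem conj_one_add_I_mul_exp (s : ℝ) :
    (starRingEnd ℂ) ((1 + I) * exp (I * s)) = (1 - I) * (exp (I * s))⁻¹ := by
  rw [map_mul, ← exp_conj, ← exp_neg]
  simp [conj_ofReal, sub_eq_add_neg]

-- The frequencies are integer casts so that the modes match the Fourier coefficients syntactically.
theorem perturbation_mul_conj_eq_modes (α β γ : ℂ) (t θ : ℝ) :
    (α + β * exp (I * (t + θ)) + γ * exp (-I * (t + θ))) *
        (starRingEnd ℂ) ((1 + I) * exp (I * ↑(t + θ))) =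
      (1 - I) * (exp (-I * θ) * (α * exp (-I * ((1 : ℤ) : ℂ) * t)) +
        β * exp (-I * ((0 : ℤ) : ℂ) * t) +
        exp (-2 * I * θ) * (γ * exp (-I * ((2 : ℤ) : ℂ) * t))) := by
  rw [conj_one_add_I_mul_exp, ofReal_add,
    show -I * (t + θ) = -(I * t + I * θ) by ring,
    show I * (t + θ) = I * t + I * θ by ring,
    show -I * θ = -(I * θ) by ring,
    show -2 * I * θ = -(I * θ + I * θ) by ring,
    show -I * ((1 : ℤ) : ℂ) * t = -(I * t) by push_cast; ring,
    show -I * ((0 : ℤ) : ℂ) * t = 0 by push_cast; ring,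
    show -I * ((2 : ℤ) : ℂ) * t = -(I * t + I * t) by push_cast; ring]
  simp only [exp_neg, exp_add, exp_zero]
  have := exp_ne_zero (I * t)
  have := exp_ne_zero (I * θ)
  field_simp

theorem bifurcation_function_example_general
    (a b c : ℝ → ℂ) (ha : Continuous a) (hb : Continuous b) (hc : Continuous c) :
    let z₀ : ℝ → ℂ := fun t => (1 + I) * Complex.exp (I * t)
    let fourier : (ℝ → ℂ) → ℤ → ℂ := fun f m =>
      (1 / (2 * Real.pi) : ℂ) * ∫ t in (0 : ℝ)..(2 * Real.pi), f t * Complex.exp (-I * m * t)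
    ∀ θ : ℝ,
      (∫ t in (0 : ℝ)..(2 * Real.pi),
        ((a t + b t * Complex.exp (I * (t + θ)) + c t * Complex.exp (-I * (t + θ))) *
          (starRingEnd ℂ) (z₀ (t + θ))).re) =
      2 * Real.pi *
        ((fourier a 1 * Complex.exp (-I * θ) + fourier b 0 +
          fourier c 2 * Complex.exp (-2 * I * θ)) * (1 - I)).re := by
  intro z₀ fourier θ
  have hcoeff (f : ℝ → ℂ) (m : ℤ) :
      ∫ t in (0 : ℝ)..(2 * Real.pi), f t * exp (-I * m * t) = 2 * Real.pi * fourier f m := by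
    have : (Real.pi : ℂ) ≠ 0 := ofReal_ne_zero.mpr Real.pi_ne_zero
    simp only [fourier]
    field_simp
  simp only [z₀, perturbation_mul_conj_eq_modes]
  rw [intervalIntegral_complex_re (by apply Continuous.intervalIntegrable; fun_prop),
    intervalIntegral.integral_const_mul, intervalIntegral.integral_add,
    intervalIntegral.integral_add, intervalIntegral.integral_const_mul,
    intervalIntegral.integral_const_mul, hcoeff, hcoeff, hcoeff, ← re_ofReal_mul]
  · congr 1
    push_cast
    ring
  all_goals apply Continuous.intervalIntegrable; fun_prop

/-- For the perturbed system with `x₀(t) = e^{it}`, `z₀(t) = (1+i)e^{it}`, `T = 2π`,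
the bifurcation function `M(θ)` equals
`2π Re[(â₁ e^{-iθ} + b̂₀ + ĉ₂ e^{-2iθ})(1-i)]`, where `f̂ₘ` is the `m`-th Fourier
coefficient. -/
theorem bifurcation_function_example
    (a b c : ℝ → ℂ) (ha : Continuous a) (hb : Continuous b) (hc : Continuous c)
    (hap : ∀ t, a (t + 2 * Real.pi) = a t) (hbp : ∀ t, b (t + 2 * Real.pi) = b t)
    (hcp : ∀ t, c (t + 2 * Real.pi) = c t) :
    let z₀ : ℝ → ℂ := fun t => (1 + I) * Complex.exp (I * t)
    let fourier : (ℝ → ℂ) → ℤ → ℂ := fun f m =>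
      (1 / (2 * Real.pi) : ℂ) * ∫ t in (0 : ℝ)..(2 * Real.pi), f t * Complex.exp (-I * m * t)
    ∀ θ : ℝ,
      (∫ t in (0 : ℝ)..(2 * Real.pi),
        ((a t + b t * Complex.exp (I * (t + θ)) + c t * Complex.exp (-I * (t + θ))) *
          (starRingEnd ℂ) (z₀ (t + θ))).re) =
      2 * Real.pi *
        ((fourier a 1 * Complex.exp (-I * θ) + fourier b 0 +
          fourier c 2 * Complex.exp (-2 * I * θ)) * (1 - I)).re :=
  bifurcation_function_example_general a b c ha hb hc
end

section
/- For 0 ≤ ε < 1, any 2π-periodic solution x(t) of ẋ = (1-|x|²)x + i|x|²x + ε(a(t) + b(t)x + c(t)x̄) satisfies max_t |x(t)| ≤ (1 + ‖a‖_∞ + ‖b‖_∞ + ‖c‖_∞)^{1/2}. -/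
/-!
At a maximum point `t₀` of the periodic function `‖x‖²` its derivative `2⟪x, ẋ⟫` vanishes. The
rotation term `I‖x‖²x` is orthogonal to `x`, so with `n = ‖x t₀‖` this reads
`(n² - 1) n² = ε ⟪x, a + b x + c x̄⟫ ≤ ε (‖a‖_∞ + (‖b‖_∞ + ‖c‖_∞) n) n`, which for `n > 1` and
`ε ≤ 1` forces `n² ≤ 1 + ‖a‖_∞ + ‖b‖_∞ + ‖c‖_∞`.
-/

open Complex

open scoped RealInnerProductSpace ComplexConjugate

namespace Function.Periodic

variable {c : ℝ}

theorem exists_forall_le_of_continuous {α : Type*} [LinearOrder α] [TopologicalSpace α]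
    [ClosedIciTopology α] {f : ℝ → α} (hp : Periodic f c) (hc : c ≠ 0)
    (hf : Continuous f) : ∃ t₀, ∀ t, f t ≤ f t₀ := by
  obtain ⟨_, ⟨t₀, rfl⟩, hmax⟩ :=
    (hp.compact_of_continuous hc hf).exists_isGreatest (Set.range_nonempty f)
  exact ⟨t₀, fun t ↦ hmax ⟨t, rfl⟩⟩

theorem norm_le_iSup_norm {E : Type*} [SeminormedAddCommGroup E] {f : ℝ → E}
    (hp : Periodic f c) (hc : c ≠ 0) (hf : Continuous f) (t : ℝ) : ‖f t‖ ≤ ⨆ s, ‖f s‖ :=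
  le_ciSup ((hp.comp norm).compact_of_continuous hc hf.norm).bddAbove t

theorem exists_forall_norm_le_and_inner_deriv_eq_zero {E : Type*} [NormedAddCommGroup E]
    [InnerProductSpace ℝ E] {f f' : ℝ → E} (hp : Periodic f c) (hc : c ≠ 0)
    (hf : ∀ t, HasDerivAt f (f' t) t) : ∃ t₀, (∀ t, ‖f t‖ ≤ ‖f t₀‖) ∧ ⟪f t₀, f' t₀⟫ = 0 := by
  have hcont : Continuous f := continuous_iff_continuousAt.2 fun t ↦ (hf t).continuousAt
  obtain ⟨t₀, hmax⟩ := (hp.comp norm).exists_forall_le_of_continuous hc hcont.norm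
  have hmax_sq : IsLocalMax (‖f ·‖ ^ 2) t₀ := Filter.Eventually.of_forall fun t ↦
    pow_le_pow_left₀ (norm_nonneg _) (hmax t) 2
  refine ⟨t₀, hmax, ?_⟩
  simpa using hmax_sq.hasDerivAt_eq_zero (hf t₀).norm_sq

end Function.Periodic

theorem Complex.inner_add_mul_add_mul_conj_le {z a b c : ℂ} {A B C : ℝ} (ha : ‖a‖ ≤ A)
    (hb : ‖b‖ ≤ B) (hc : ‖c‖ ≤ C) : ⟪z, a + b * z + c * conj z⟫ ≤ (A + (B + C) * ‖z‖) * ‖z‖ := by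
  have hsum : ‖a + b * z + c * conj z‖ ≤ A + (B + C) * ‖z‖ := by
    calc ‖a + b * z + c * conj z‖ ≤ ‖a‖ + ‖b‖ * ‖z‖ + ‖c‖ * ‖z‖ := by
          simpa [norm_mul, RCLike.norm_conj] using
            norm_add₃_le (a := a) (b := b * z) (c := c * conj z)
      _ ≤ A + (B + C) * ‖z‖ := by nlinarith [norm_nonneg z]
  calc ⟪z, a + b * z + c * conj z⟫ ≤ ‖z‖ * ‖a + b * z + c * conj z‖ := real_inner_le_norm _ _
    _ ≤ (A + (B + C) * ‖z‖) * ‖z‖ := by rw [mul_comm]; gcongr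

theorem Complex.inner_radial_add_rotation_add (z w : ℂ) (ε : ℝ) :
    ⟪z, (1 - (‖z‖ : ℂ) ^ 2) * z + I * (‖z‖ : ℂ) ^ 2 * z + ε * w⟫ =
      (1 - ‖z‖ ^ 2) * ‖z‖ ^ 2 + ε * ⟪z, w⟫ := by
  simp only [Complex.inner, add_mul, mul_assoc, mul_conj', add_re]
  simp [← ofReal_pow, mul_re]

theorem sq_le_of_sq_sub_one_mul_sq_le {n ε A L : ℝ} (hn : 0 ≤ n) (hε : ε ≤ 1) (hA : 0 ≤ A)
    (hL : 0 ≤ L) (h : (n ^ 2 - 1) * n ^ 2 ≤ ε * ((A + L * n) * n)) : n ^ 2 ≤ 1 + A + L := by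
  rcases le_or_gt n 1 with hn1 | hn1
  · nlinarith
  · have : (n ^ 2 - 1) * n ^ 2 ≤ (A + L) * n ^ 2 := calc
      _ ≤ ε * ((A + L * n) * n) := h
      _ ≤ (A + L * n) * n := mul_le_of_le_one_left (by positivity) hε
      _ ≤ (A + L) * n ^ 2 := by
        nlinarith [mul_le_mul_of_nonneg_left (show n ≤ n ^ 2 by nlinarith) hA]
    nlinarith [le_of_mul_le_mul_right this (by positivity)]

/-- For `0 ≤ ε < 1`, every `2π`-periodic solution of
`ẋ = (1-|x|²)x + i|x|²x + ε(a(t) + b(t)x + c(t)x̄)` satisfies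
`max |x(t)| ≤ (1 + ‖a‖_∞ + ‖b‖_∞ + ‖c‖_∞)^{1/2}`. -/
theorem apriori_bound_periodic_solutions
    (a b c : ℝ → ℂ) (ha : Continuous a) (hb : Continuous b) (hc : Continuous c)
    (hap : ∀ t, a (t + 2 * Real.pi) = a t) (hbp : ∀ t, b (t + 2 * Real.pi) = b t)
    (hcp : ∀ t, c (t + 2 * Real.pi) = c t)
    (ε : ℝ) (hε0 : 0 ≤ ε) (hε1 : ε < 1)
    (x : ℝ → ℂ)
    (hx : ∀ t, HasDerivAt x
      ((1 - (‖x t‖ : ℂ) ^ 2) * x t + I * (‖x t‖ : ℂ) ^ 2 * x t +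
        ε * (a t + b t * x t + c t * (starRingEnd ℂ) (x t))) t)
    (hxper : ∀ t, x (t + 2 * Real.pi) = x t) :
    ∀ t, ‖x t‖ ≤ Real.sqrt (1 + (⨆ s, ‖a s‖) + (⨆ s, ‖b s‖) + (⨆ s, ‖c s‖)) := by
  have h2π : 2 * Real.pi ≠ 0 := by positivity
  have hA := Function.Periodic.norm_le_iSup_norm hap h2π ha
  have hB := Function.Periodic.norm_le_iSup_norm hbp h2π hb
  have hC := Function.Periodic.norm_le_iSup_norm hcp h2π hc
  obtain ⟨t₀, hmax, hcrit⟩ :=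
    Function.Periodic.exists_forall_norm_le_and_inner_deriv_eq_zero hxper h2π hx
  rw [Complex.inner_radial_add_rotation_add] at hcrit
  have hforcing := mul_le_mul_of_nonneg_left
    (Complex.inner_add_mul_add_mul_conj_le (z := x t₀) (hA t₀) (hB t₀) (hC t₀)) hε0
  have hbound := sq_le_of_sq_sub_one_mul_sq_le (norm_nonneg (x t₀)) hε1.le
    ((norm_nonneg _).trans (hA 0)) (add_nonneg ((norm_nonneg _).trans (hB 0))
      ((norm_nonneg _).trans (hC 0))) (by linarith)
  intro t
  exact Real.le_sqrt_of_sq_le <| (pow_le_pow_left₀ (norm_nonneg _) (hmax t) 2).trans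
    (by linarith)
end
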